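/- Well-formedness is necessary for contravariance of duality: let T = !m⟨α≤?m(end).end⟩(end).α and S = !m⟨α≤?m(end).end⟩(end).?m(end).end (note that T is not well formed, since α occurs as a top-level continuation rather than within prefixes). Then T ≤ S holds, but the judgment (α≤?m(end).end) ⊢ !m(end).end ≤ α does not hold, and consequently co(S) = ?m⟨α≤?m(end).end⟩(end).!m(end).end is not a subtype of co(T) = ?m⟨α≤?m(end).end⟩(end).α. -/
import Mathlib


set_option maxHeartbeats 1000000

/-! Tags, type variables -/
abbrev Tag := ℕ
abbrev TVar := ℕ

/-! Syntax of types: a type is either `top` or an endpoint type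
    (endpoint positions are constrained by the predicate `IsEnd` below). -/
mutual
inductive Ty where
  | top : Ty
  | endT : Ty
  | tvar : TVar → Ty
  | intC : Branches → Ty
  | extC : Branches → Ty
  | mu : TVar → Ty → Ty
inductive Branches where
  | nil : Branches
  | cons (m : Tag) (α : TVar) (bound arg cont : Ty) (rest : Branches) : Branches
end

/-! Substitution of a type for a type variable (the branch binder ⟨α≤t⟩
    binds α in the argument and continuation but not in the bound; μα binds α). -/
mutual
def substTy : Ty → Ty → TVar → Ty
  | .top, _, _ => .top
  | .endT, _, _ => .endT
  | .tvar β, s, α => if β = α then s else .tvar β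
  | .intC bs, s, α => .intC (substBs bs s α)
  | .extC bs, s, α => .extC (substBs bs s α)
  | .mu β T, s, α => if β = α then .mu β T else .mu β (substTy T s α)
def substBs : Branches → Ty → TVar → Branches
  | .nil, _, _ => .nil
  | .cons m β bnd arg cont rest, s, α =>
      .cons m β (substTy bnd s α)
        (if β = α then arg else substTy arg s α)
        (if β = α then cont else substTy cont s α)
        (substBs rest s α)
end

/-! Free type variables. -/
mutual
def freeTv : Ty → Finset TVar
  | .top => ∅
  | .endT => ∅
  | .tvar β => {β}
  | .intC bs => freeTvBs bs
  | .extC bs => freeTvBs bs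
  | .mu β T => freeTv T \ {β}
def freeTvBs : Branches → Finset TVar
  | .nil => ∅
  | .cons _ β bnd arg cont rest =>
      freeTv bnd ∪ ((freeTv arg ∪ freeTv cont) \ {β}) ∪ freeTvBs rest
end

/-! Top-level (unguarded) type variables, and guardedness of recursion. -/
def tlv : Ty → Finset TVar
  | .tvar β => {β}
  | .mu β T => tlv T \ {β}
  | _ => ∅

mutual
inductive Guarded : Ty → Prop
  | top : Guarded .top
  | endT : Guarded .endT
  | tvar {β} : Guarded (.tvar β)
  | intC {bs} : GuardedBs bs → Guarded (.intC bs)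
  | extC {bs} : GuardedBs bs → Guarded (.extC bs)
  | mu {β T} : β ∉ tlv T → Guarded T → Guarded (.mu β T)
inductive GuardedBs : Branches → Prop
  | nil : GuardedBs .nil
  | cons {m β bnd arg cont rest} : Guarded bnd → Guarded arg → Guarded cont →
      GuardedBs rest → GuardedBs (.cons m β bnd arg cont rest)
end

/-! Endpoint types: `top` may occur only in bound/argument positions. -/
mutual
inductive IsEnd : Ty → Prop
  | endT : IsEnd .endT
  | tvar {β} : IsEnd (.tvar β)
  | intC {bs} : IsEndBs bs → IsEnd (.intC bs)
  | extC {bs} : IsEndBs bs → IsEnd (.extC bs)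
  | mu {β T} : IsEnd T → IsEnd (.mu β T)
inductive IsEndBs : Branches → Prop
  | nil : IsEndBs .nil
  | cons {m β bnd arg cont rest} : IsEnd cont → IsEndBs rest →
      IsEndBs (.cons m β bnd arg cont rest)
end

/-! Equality of types modulo folding/unfolding of recursion. -/
mutual
inductive UnfEq : Ty → Ty → Prop
  | refl {t} : UnfEq t t
  | symm {t s} : UnfEq t s → UnfEq s t
  | trans {t u s} : UnfEq t u → UnfEq u s → UnfEq t s
  | unfold {β T} : UnfEq (.mu β T) (substTy T (.mu β T) β)
  | mu {β T S} : UnfEq T S → UnfEq (.mu β T) (.mu β S)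
  | intC {bs bs'} : UnfEqBs bs bs' → UnfEq (.intC bs) (.intC bs')
  | extC {bs bs'} : UnfEqBs bs bs' → UnfEq (.extC bs) (.extC bs')
inductive UnfEqBs : Branches → Branches → Prop
  | nil : UnfEqBs .nil .nil
  | cons {m β bnd bnd' arg arg' cont cont' rest rest'} :
      UnfEq bnd bnd' → UnfEq arg arg' → UnfEq cont cont' → UnfEqBs rest rest' →
      UnfEqBs (.cons m β bnd arg cont rest) (.cons m β bnd' arg' cont' rest')
end

/-! Duality. -/
inductive BranchesDual (D : Ty → Ty → Prop) : Branches → Branches → Prop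
  | nil : BranchesDual D .nil .nil
  | cons {m β bnd arg T S rest rest'} : D T S → BranchesDual D rest rest' →
      BranchesDual D (.cons m β bnd arg T rest) (.cons m β bnd arg S rest')

def DualityCases (D : Ty → Ty → Prop) (T S : Ty) : Prop :=
  (T = .endT ∧ S = .endT)
  ∨ (∃ bs bs', T = .extC bs ∧ S = .intC bs' ∧ BranchesDual D bs bs')
  ∨ (∃ bs bs', T = .intC bs ∧ S = .extC bs' ∧ BranchesDual D bs bs')
  ∨ (∃ β T', T = .mu β T' ∧ D (substTy T' (.mu β T') β) S)
  ∨ (∃ β S', S = .mu β S' ∧ D T (substTy S' (.mu β S') β))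

def IsDualityRel (D : Ty → Ty → Prop) : Prop := ∀ T S, D T S → DualityCases D T S

def Dual (T S : Ty) : Prop := ∃ D, IsDualityRel D ∧ D T S

/-! Bound environments. `lookupB` returns the bound of the rightmost occurrence. -/
abbrev BEnv := List (TVar × Ty)

def lookupB : BEnv → TVar → Option Ty
  | [], _ => none
  | (β, t) :: rest, α =>
      match lookupB rest α with
      | some s => some s
      | none => if β = α then some t else none

/-! Branch membership. -/
def BMem (b : Tag × TVar × Ty × Ty × Ty) : Branches → Prop
  | .nil => False
  | .cons m β bnd arg cont rest => b = (m, β, bnd, arg, cont) ∨ BMem b rest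

/-! Coinductive subtyping. -/
def SubCases (S : BEnv → Ty → Ty → Prop) (Δ : BEnv) (t s : Ty) : Prop :=
  t = s
  ∨ s = .top
  ∨ (∃ α b, t = .tvar α ∧ lookupB Δ α = some b ∧ S Δ b s)
  ∨ (∃ bsT bsS, t = .extC bsT ∧ s = .extC bsS ∧
      ∀ m β bnd arg cont, BMem (m, β, bnd, arg, cont) bsT →
        ∃ arg' cont', BMem (m, β, bnd, arg', cont') bsS ∧
          S (Δ ++ [(β, bnd)]) arg arg' ∧ S (Δ ++ [(β, bnd)]) cont cont')
  ∨ (∃ bsT bsS, t = .intC bsT ∧ s = .intC bsS ∧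
      ∀ m β bnd arg' cont', BMem (m, β, bnd, arg', cont') bsS →
        ∃ arg cont, BMem (m, β, bnd, arg, cont) bsT ∧
          S (Δ ++ [(β, bnd)]) arg' arg ∧ S (Δ ++ [(β, bnd)]) cont cont')
  ∨ (∃ β T, t = .mu β T ∧ S Δ (substTy T (.mu β T) β) s)
  ∨ (∃ β T, s = .mu β T ∧ S Δ t (substTy T (.mu β T) β))

def IsCoSub (S : BEnv → Ty → Ty → Prop) : Prop := ∀ Δ t s, S Δ t s → SubCases S Δ t s

def Subt (Δ : BEnv) (t s : Ty) : Prop := ∃ S, IsCoSub S ∧ S Δ t s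

/-! Coinductive weight bounds and weights. -/
def WCases (W : BEnv → Ty → ℕ → Prop) (Δ : BEnv) (t : Ty) (n : ℕ) : Prop :=
  t = .endT
  ∨ (∃ bs, t = .intC bs)
  ∨ (∃ α b, t = .tvar α ∧ lookupB Δ α = some b ∧ W Δ b n)
  ∨ (∃ bs, t = .extC bs ∧ 0 < n ∧
      ∀ m β bnd arg cont, BMem (m, β, bnd, arg, cont) bs →
        W (Δ ++ [(β, bnd)]) arg (n - 1) ∧ W (Δ ++ [(β, bnd)]) cont n)
  ∨ (∃ β T, t = .mu β T ∧ W Δ (substTy T (.mu β T) β) n)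

def IsCoW (W : BEnv → Ty → ℕ → Prop) : Prop := ∀ Δ t n, W Δ t n → WCases W Δ t n

def WBound (Δ : BEnv) (t : Ty) (n : ℕ) : Prop := ∃ W, IsCoW W ∧ W Δ t n

noncomputable def weight (Δ : BEnv) (t : Ty) : ℕ∞ :=
  sInf {x : ℕ∞ | ∃ n : ℕ, x = (n : ℕ∞) ∧ WBound Δ t n}

/-! Well-formedness: I inner variables (may occur only within prefixes),
    O outer variables. -/
mutual
inductive WF : Finset TVar → Finset TVar → Ty → Prop
  | endT {I O} : WF I O .endT
  | top {I O} : WF I O .top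
  | tvar {I O α} : α ∈ O → α ∉ I → WF I O (.tvar α)
  | mu {I O α T} : WF I (insert α O) T → WF I O (.mu α T)
  | intC {I O bs} : WFBs I O bs → WF I O (.intC bs)
  | extC {I O bs} : WFBs I O bs → WF I O (.extC bs)
inductive WFBs : Finset TVar → Finset TVar → Branches → Prop
  | nil {I O} : WFBs I O .nil
  | cons {I O m α bnd arg cont rest} :
      WF ∅ (I ∪ O) bnd → WF ∅ (insert α (I ∪ O)) arg → WF (insert α I) O cont →
      WFBs I O rest → WFBs I O (.cons m α bnd arg cont rest)
end

/-- ?m(end).end (tag m = 0, unused binder variable 1) -/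
def qEnd : Ty := .extC (.cons 0 1 .top .endT .endT .nil)
/-- !m(end).end -/
def sndEnd : Ty := .intC (.cons 0 1 .top .endT .endT .nil)
/-- T = !m⟨α≤?m(end).end⟩(end).α  (α = 0) — ill formed -/
def T8 : Ty := .intC (.cons 0 0 qEnd .endT (.tvar 0) .nil)
/-- S = !m⟨α≤?m(end).end⟩(end).?m(end).end -/
def S8 : Ty := .intC (.cons 0 0 qEnd .endT qEnd .nil)
/-- co(T) = ?m⟨α≤?m(end).end⟩(end).α -/
def coT8 : Ty := .extC (.cons 0 0 qEnd .endT (.tvar 0) .nil)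
/-- co(S) = ?m⟨α≤?m(end).end⟩(end).!m(end).end -/
def coS8 : Ty := .extC (.cons 0 0 qEnd .endT sndEnd .nil)


/-- Witness coinductive subtyping for part 1. -/
def S1 : BEnv → Ty → Ty → Prop := fun Δ t s =>
  t = s ∨ (Δ = [] ∧ t = T8 ∧ s = S8) ∨ (Δ = [(0, qEnd)] ∧ t = .tvar 0 ∧ s = qEnd)

lemma S1_cosub : IsCoSub S1 := by
  intro Δ t s h
  rcases h with rfl | ⟨rfl, rfl, rfl⟩ | ⟨rfl, rfl, rfl⟩
  · exact Or.inl rfl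
  · -- T8 ≤ S8 : internal choice case
    refine Or.inr (Or.inr (Or.inr (Or.inr (Or.inl ?_))))
    refine ⟨_, _, rfl, rfl, ?_⟩
    intro m β bnd arg' cont' hmem
    rcases hmem with h | h
    · cases h
      refine ⟨.endT, .tvar 0, Or.inl rfl, Or.inl rfl, ?_⟩
      exact Or.inr (Or.inr ⟨rfl, rfl, rfl⟩)
    · exact absurd h id
  · -- tvar 0 ≤ qEnd via lookup
    refine Or.inr (Or.inr (Or.inl ?_))
    exact ⟨0, qEnd, rfl, rfl, Or.inl rfl⟩

/-- Witness duality relation for part 3. -/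
def D1 : Ty → Ty → Prop := fun t s =>
  (t = S8 ∧ s = coS8) ∨ (t = qEnd ∧ s = sndEnd) ∨ (t = .endT ∧ s = .endT)

lemma D1_dual : IsDualityRel D1 := by
  intro T S h
  rcases h with ⟨rfl, rfl⟩ | ⟨rfl, rfl⟩ | ⟨rfl, rfl⟩
  · refine Or.inr (Or.inr (Or.inl ?_))
    refine ⟨_, _, rfl, rfl, ?_⟩
    exact BranchesDual.cons (Or.inr (Or.inl ⟨rfl, rfl⟩)) BranchesDual.nil
  · refine Or.inr (Or.inl ?_)
    refine ⟨_, _, rfl, rfl, ?_⟩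
    exact BranchesDual.cons (Or.inr (Or.inr ⟨rfl, rfl⟩)) BranchesDual.nil
  · exact Or.inl ⟨rfl, rfl⟩

lemma no_cosub_sndEnd_tvar {S} (hS : IsCoSub S) (h : S [(0, qEnd)] sndEnd (.tvar 0)) :
    False := by
  have := hS _ _ _ h
  rcases this with h1 | h1 | ⟨α, b, h1, _⟩ | ⟨bsT, bsS, h1, _⟩ |
    ⟨bsT, bsS, h1, h2, _⟩ | ⟨β, T, h1, _⟩ | ⟨β, T, h1, _⟩ <;>
    simp_all [sndEnd]

lemma not_sub_sndEnd_tvar : ¬ Subt [(0, qEnd)] sndEnd (.tvar 0) := by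
  rintro ⟨S, hS, h⟩
  exact no_cosub_sndEnd_tvar hS h

/-- Well-formedness is necessary for contravariance of duality: T ≤ S holds,
but α≤?m(end).end ⊢ !m(end).end ≤ α does not, hence co(S) ≤ co(T) fails. -/
theorem wellformedness_necessary :
    Subt [] T8 S8 ∧
    ¬ Subt [(0, qEnd)] sndEnd (.tvar 0) ∧
    Dual S8 coS8 ∧
    ¬ Subt [] coS8 coT8 := by
  refine ⟨⟨S1, S1_cosub, Or.inr (Or.inl ⟨rfl, rfl, rfl⟩)⟩,
    not_sub_sndEnd_tvar, ⟨D1, D1_dual, Or.inl ⟨rfl, rfl⟩⟩, ?_⟩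
  rintro ⟨S, hS, h⟩
  have := hS _ _ _ h
  rcases this with h1 | h1 | ⟨α, b, h1, _⟩ |
    ⟨bsT, bsS, h1, h2, h3⟩ | ⟨bsT, bsS, h1, _⟩ | ⟨β, T, h1, _⟩ | ⟨β, T, h1, _⟩
  · simp_all [coS8, coT8, sndEnd]
  · simp_all [coT8]
  · simp_all [coS8]
  · -- external choice case: forces S [(0,qEnd)] sndEnd (tvar 0)
    have hbsT : bsT = Branches.cons 0 0 qEnd .endT sndEnd .nil := by
      simpa [coS8] using h1.symm
    have hbsS : bsS = Branches.cons 0 0 qEnd .endT (.tvar 0) .nil := by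
      simpa [coT8] using h2.symm
    subst hbsT hbsS
    obtain ⟨arg', cont', hmem, _, hsub⟩ :=
      h3 0 0 qEnd .endT sndEnd (Or.inl rfl)
    rcases hmem with hm | hm
    · simp only [Prod.mk.injEq] at hm
      obtain ⟨-, -, -, -, rfl⟩ := hm
      exact (no_cosub_sndEnd_tvar hS hsub).elim
    · exact absurd hm id
  · simp_all [coS8]
  · simp_all [coS8]
  · simp_all [coT8]
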